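/- Suppose λ > μ₁ > μ₂ > 0 and h̄ > 0. Consider the fluid model of two queues in tandem: trajectories (Q̄₁(t), Q̄₂(t)) with Q̄₁' = λ·1{Q̄₁ < h̄ and Q̄₂ < h̄} − μ₁·1{Q̄₁ > 0}, Q̄₂' = μ₁·1{Q̄₁ > 0} − μ₂·1{Q̄₂ > 0} (with the convention that a queue at 0 cannot decrease and a queue at h̄ with inflow exceeding outflow stays at h̄ due to discarding). Then from any initial condition in [0, h̄]², the trajectory reaches the point (0, h̄) in finite time, and (0, h̄) is an absorbing state. -/
import Mathlib


open intervalIntegral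

/-- A fluid trajectory of two queues in tandem with ingress discarding at threshold `h`:
`a` is the (thinned) exogenous arrival rate, `s1, s2` the service rates of queues 1 and 2.
Arrivals flow at rate `lam` whenever both queues are strictly below `h`, are discarded
(rate `0`) whenever some queue is strictly above `h`; a queue at `0` cannot serve faster
than its inflow (so it cannot become negative), and queue lengths evolve as integrals of
(inflow − outflow). -/
def TandemTraj (lam μ1 μ2 h : ℝ) (Q1 Q2 : ℝ → ℝ) : Prop :=
  ∃ a s1 s2 : ℝ → ℝ,
    (∀ t : ℝ, 0 ≤ t → Q1 t = Q1 0 + ∫ s in (0 : ℝ)..t, (a s - s1 s)) ∧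
    (∀ t : ℝ, 0 ≤ t → Q2 t = Q2 0 + ∫ s in (0 : ℝ)..t, (s1 s - s2 s)) ∧
    (∀ t : ℝ, IntervalIntegrable (fun s => a s - s1 s) MeasureTheory.volume 0 t) ∧
    (∀ t : ℝ, IntervalIntegrable (fun s => s1 s - s2 s) MeasureTheory.volume 0 t) ∧
    (∀ t : ℝ, 0 ≤ t → 0 ≤ Q1 t ∧ 0 ≤ Q2 t) ∧
    (∀ t : ℝ, 0 ≤ t →
      (0 ≤ a t ∧ a t ≤ lam) ∧
      ((Q1 t < h ∧ Q2 t < h) → a t = lam) ∧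
      ((h < Q1 t ∨ h < Q2 t) → a t = 0) ∧
      (0 ≤ s1 t ∧ s1 t ≤ μ1) ∧
      (0 < Q1 t → s1 t = μ1) ∧
      (Q1 t = 0 → s1 t = min (a t) μ1) ∧
      (0 ≤ s2 t ∧ s2 t ≤ μ2) ∧
      (0 < Q2 t → s2 t = μ2) ∧
      (Q2 t = 0 → s2 t = min (s1 t) μ2))


open intervalIntegral MeasureTheory Set

private lemma ae_Icc_of_Ioc {u t1 : ℝ} {P : ℝ → Prop}
    (hb : ∀ s ∈ Set.Ioc u t1, P s) :
    ∀ᵐ x ∂(volume.restrict (Set.Icc u t1)), P x := by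
  have h1 : ∀ᵐ x ∂(volume.restrict (Set.Icc u t1)), x ∈ Set.Icc u t1 :=
    ae_restrict_mem measurableSet_Icc
  have h2 : ∀ᵐ x ∂(volume.restrict (Set.Icc u t1)), x ≠ u := by
    apply ae_restrict_of_ae
    have : {x : ℝ | ¬ x ≠ u} = {u} := by ext x; simp
    rw [MeasureTheory.ae_iff, this]
    exact Real.volume_singleton
  filter_upwards [h1, h2] with x hx hxu
  exact hb x ⟨lt_of_le_of_ne hx.1 (Ne.symm hxu), hx.2⟩

private lemma integral_ge_const {f : ℝ → ℝ} {u t1 c : ℝ} (hut : u ≤ t1)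
    (hint : IntervalIntegrable f volume u t1)
    (hb : ∀ s ∈ Set.Ioc u t1, c ≤ f s) :
    c * (t1 - u) ≤ ∫ s in u..t1, f s := by
  have h := intervalIntegral.integral_mono_ae_restrict hut
    (_root_.intervalIntegrable_const (c := c)) hint (ae_Icc_of_Ioc hb)
  simpa [smul_eq_mul, mul_comm] using h

private lemma integral_le_const {f : ℝ → ℝ} {u t1 c : ℝ} (hut : u ≤ t1)
    (hint : IntervalIntegrable f volume u t1)
    (hb : ∀ s ∈ Set.Ioc u t1, f s ≤ c) :
    (∫ s in u..t1, f s) ≤ c * (t1 - u) := by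
  have h := intervalIntegral.integral_mono_ae_restrict hut
    hint (_root_.intervalIntegrable_const (c := c)) (ae_Icc_of_Ioc hb)
  simpa [smul_eq_mul, mul_comm] using h

private lemma last_time {F : ℝ → ℝ} {u t1 : ℝ} (hut : u ≤ t1)
    (hF : ContinuousOn F (Set.Icc u t1)) {C : Set ℝ} (hC : IsClosed C)
    (hu : F u ∈ C) :
    ∃ τ, τ ∈ Set.Icc u t1 ∧ F τ ∈ C ∧ ∀ s ∈ Set.Ioc τ t1, F s ∉ C := by
  set S : Set ℝ := Set.Icc u t1 ∩ F ⁻¹' C with hSdef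
  have hSne : S.Nonempty := ⟨u, ⟨le_refl u, hut⟩, hu⟩
  have hScl : IsClosed S := hF.preimage_isClosed_of_isClosed isClosed_Icc hC
  have hSbd : BddAbove S := ⟨t1, fun x hx => hx.1.2⟩
  have hScp : IsCompact S := isCompact_Icc.of_isClosed_subset hScl (fun x hx => hx.1)
  have hτ := hScp.sSup_mem hSne
  refine ⟨sSup S, hτ.1, hτ.2, ?_⟩
  intro s hs hFs
  have hmem : s ∈ S := ⟨⟨le_trans hτ.1.1 hs.1.le, hs.2⟩, hFs⟩
  exact absurd (le_csSup hSbd hmem) (not_le.mpr hs.1)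

private lemma Q_increment {f Q : ℝ → ℝ} (Q0 : ℝ)
    (hQ : ∀ t : ℝ, 0 ≤ t → Q t = Q0 + ∫ s in (0:ℝ)..t, f s)
    (hint : ∀ t : ℝ, IntervalIntegrable f volume 0 t)
    {u t1 : ℝ} (hu : 0 ≤ u) (ht1 : 0 ≤ t1) :
    Q t1 = Q u + ∫ s in u..t1, f s := by
  have hadd := intervalIntegral.integral_add_adjacent_intervals (hint u)
    ((hint u).symm.trans (hint t1))
  rw [hQ t1 ht1, hQ u hu]
  linarith [hadd]

/-- Two queues in tandem with `λ > μ₁ > μ₂ > 0` and ingress discarding at threshold `h̄ > 0`: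
from any initial condition in `[0, h̄]²` the fluid trajectory reaches `(0, h̄)` in finite time,
and `(0, h̄)` is an absorbing state. -/
theorem tandem_fluid_absorbed_at_zero_h (lam μ1 μ2 h : ℝ)
    (hμ2 : 0 < μ2) (h21 : μ2 < μ1) (h1lam : μ1 < lam) (hh : 0 < h)
    (Q1 Q2 : ℝ → ℝ) (htraj : TandemTraj lam μ1 μ2 h Q1 Q2)
    (hinit : Q1 0 ∈ Set.Icc 0 h ∧ Q2 0 ∈ Set.Icc 0 h) :
    (∃ T : ℝ, 0 ≤ T ∧ ∀ t : ℝ, T ≤ t → Q1 t = 0 ∧ Q2 t = h) ∧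
    ((Q1 0 = 0 ∧ Q2 0 = h) → ∀ t : ℝ, 0 ≤ t → Q1 t = 0 ∧ Q2 t = h) := by
  obtain ⟨a, s1, s2, hQ1, hQ2, hIf, hIg, hpos, hc⟩ := htraj
  have hμ1 : (0:ℝ) < μ1 := lt_trans hμ2 h21
  -- sub-interval integrability
  have hIf' : ∀ u t1 : ℝ, IntervalIntegrable (fun s => a s - s1 s) volume u t1 :=
    fun u t1 => (hIf u).symm.trans (hIf t1)
  have hIg' : ∀ u t1 : ℝ, IntervalIntegrable (fun s => s1 s - s2 s) volume u t1 :=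
    fun u t1 => (hIg u).symm.trans (hIg t1)
  -- increments
  have hQ1d : ∀ u t1 : ℝ, 0 ≤ u → 0 ≤ t1 →
      Q1 t1 = Q1 u + ∫ s in u..t1, (a s - s1 s) :=
    fun u t1 hu ht1 => Q_increment (Q1 0) hQ1 hIf hu ht1
  have hQ2d : ∀ u t1 : ℝ, 0 ≤ u → 0 ≤ t1 →
      Q2 t1 = Q2 u + ∫ s in u..t1, (s1 s - s2 s) :=
    fun u t1 hu ht1 => Q_increment (Q2 0) hQ2 hIg hu ht1
  -- continuity on nonneg intervals
  have hQ1c : ∀ u t1 : ℝ, 0 ≤ u → ContinuousOn Q1 (Set.Icc u t1) := by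
    intro u t1 hu
    have hcont : Continuous (fun t => Q1 0 + ∫ s in (0:ℝ)..t, (a s - s1 s)) :=
      continuous_const.add (intervalIntegral.continuous_primitive (fun c d => hIf' c d) 0)
    exact hcont.continuousOn.congr (fun t ht => hQ1 t (le_trans hu ht.1))
  have hQ2c : ∀ u t1 : ℝ, 0 ≤ u → ContinuousOn Q2 (Set.Icc u t1) := by
    intro u t1 hu
    have hcont : Continuous (fun t => Q2 0 + ∫ s in (0:ℝ)..t, (s1 s - s2 s)) :=
      continuous_const.add (intervalIntegral.continuous_primitive (fun c d => hIg' c d) 0)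
    exact hcont.continuousOn.congr (fun t ht => hQ2 t (le_trans hu ht.1))
  -- s1 = μ1 whenever Q2 < h
  have hs1μ1 : ∀ s : ℝ, 0 ≤ s → Q2 s < h → s1 s = μ1 := by
    intro s hs hlt
    rcases eq_or_lt_of_le (hpos s hs).1 with h0 | h0
    · have ha : a s = lam := (hc s hs).2.1 ⟨by rw [← h0]; exact hh, hlt⟩
      rw [(hc s hs).2.2.2.2.2.1 h0.symm, ha]
      exact min_eq_right (le_of_lt h1lam)
    · exact (hc s hs).2.2.2.2.1 h0
  -- growth of Q2 while s1 = μ1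
  have hgrow : ∀ u t1 : ℝ, 0 ≤ u → u ≤ t1 → (∀ s ∈ Set.Ioc u t1, s1 s = μ1) →
      Q2 u + (μ1 - μ2) * (t1 - u) ≤ Q2 t1 := by
    intro u t1 hu hut hs1
    have hb : ∀ s ∈ Set.Ioc u t1, μ1 - μ2 ≤ s1 s - s2 s := by
      intro s hs
      have hs0 : (0:ℝ) ≤ s := le_trans hu hs.1.le
      have := (hc s hs0).2.2.2.2.2.2.1.2
      rw [hs1 s hs]; linarith
    have := integral_ge_const hut (hIg' u t1) hb
    rw [hQ2d u t1 hu (le_trans hu hut)]; linarith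
  -- L2 : once Q2 ≥ h, stays ≥ h
  have hL2 : ∀ u t : ℝ, 0 ≤ u → u ≤ t → h ≤ Q2 u → h ≤ Q2 t := by
    intro u t hu hut hQu
    by_contra hlt
    push_neg at hlt
    obtain ⟨τ, hτmem, hτC, hτafter⟩ := last_time hut (hQ2c u t hu) isClosed_Ici hQu
    have hτ0 : 0 ≤ τ := le_trans hu hτmem.1
    have hs1 : ∀ s ∈ Set.Ioc τ t, s1 s = μ1 := by
      intro s hs
      exact hs1μ1 s (le_trans hτ0 hs.1.le) (not_le.mp (hτafter s hs))
    have hg := hgrow τ t hτ0 hτmem.2 hs1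
    have hτt : 0 ≤ t - τ := by linarith [hτmem.2]
    have hτC' : h ≤ Q2 τ := hτC
    have hprod : 0 ≤ (μ1 - μ2) * (t - τ) := mul_nonneg (by linarith) hτt
    linarith
  -- drain Q1 while positive and Q2 u ≥ h
  have hdrain : ∀ u t1 : ℝ, 0 ≤ u → u ≤ t1 → h ≤ Q2 u →
      (∀ s ∈ Set.Ioc u t1, 0 < Q1 s) → Q1 t1 ≤ Q1 u - μ1 * (t1 - u) := by
    intro u t1 hu hut hQ2u hQ1pos
    have hs1 : ∀ s ∈ Set.Ioc u t1, s1 s = μ1 := by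
      intro s hs
      exact (hc s (le_trans hu hs.1.le)).2.2.2.2.1 (hQ1pos s hs)
    have hQ2gt : ∀ s ∈ Set.Ioc u t1, h < Q2 s := by
      intro s hs
      have hg := hgrow u s hu hs.1.le (fun σ hσ => hs1 σ ⟨hσ.1, le_trans hσ.2 hs.2⟩)
      have hprod : 0 < (μ1 - μ2) * (s - u) :=
        mul_pos (by linarith) (by linarith [hs.1])
      linarith
    have hb : ∀ s ∈ Set.Ioc u t1, a s - s1 s ≤ -μ1 := by
      intro s hs
      have hs0 : (0:ℝ) ≤ s := le_trans hu hs.1.le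
      have ha0 : a s = 0 := (hc s hs0).2.2.1 (Or.inr (hQ2gt s hs))
      rw [ha0, hs1 s hs]; linarith
    have := integral_le_const hut (hIf' u t1) hb
    rw [hQ1d u t1 hu (le_trans hu hut)]; linarith
  -- Q1 absorbed at 0 (given Q2 ≥ h forever after)
  have hQ1abs : ∀ v : ℝ, 0 ≤ v → Q1 v = 0 → (∀ t : ℝ, v ≤ t → h ≤ Q2 t) →
      ∀ t : ℝ, v ≤ t → Q1 t = 0 := by
    intro v hv hQ1v hQ2v t hvt
    by_contra hne
    have hQ1t : 0 < Q1 t := lt_of_le_of_ne (hpos t (le_trans hv hvt)).1 (Ne.symm hne)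
    obtain ⟨τ, hτmem, hτC, hτafter⟩ :=
      last_time hvt (hQ1c v t hv) (isClosed_singleton (x := (0:ℝ)))
        (by simpa using hQ1v)
    have hτ0 : 0 ≤ τ := le_trans hv hτmem.1
    have hτz : Q1 τ = 0 := by simpa using hτC
    have hQ1p : ∀ s ∈ Set.Ioc τ t, 0 < Q1 s := by
      intro s hs
      have := hτafter s hs
      have hne' : Q1 s ≠ 0 := by simpa using this
      exact lt_of_le_of_ne (hpos s (le_trans hτ0 hs.1.le)).1 (Ne.symm hne')
    have hd := hdrain τ t hτ0 hτmem.2 (hQ2v τ hτmem.1) hQ1p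
    have hτt : 0 ≤ t - τ := by linarith [hτmem.2]
    have hprod : 0 ≤ μ1 * (t - τ) := mul_nonneg hμ1.le hτt
    linarith
  -- Q2 stays ≤ h (given Q1 ≡ 0 after v)
  have hQ2abs : ∀ v : ℝ, 0 ≤ v → (∀ t : ℝ, v ≤ t → Q1 t = 0) → Q2 v ≤ h →
      ∀ t : ℝ, v ≤ t → Q2 t ≤ h := by
    intro v hv hQ1z hQ2v t hvt
    by_contra hgt
    push_neg at hgt
    obtain ⟨τ, hτmem, hτC, hτafter⟩ := last_time hvt (hQ2c v t hv) isClosed_Iic hQ2v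
    have hτ0 : 0 ≤ τ := le_trans hv hτmem.1
    have hb : ∀ s ∈ Set.Ioc τ t, s1 s - s2 s ≤ 0 := by
      intro s hs
      have hs0 : (0:ℝ) ≤ s := le_trans hτ0 hs.1.le
      have hQ2gt : h < Q2 s := not_le.mp (hτafter s hs)
      have ha0 : a s = 0 := (hc s hs0).2.2.1 (Or.inr hQ2gt)
      have hs1z : s1 s = 0 := by
        rw [(hc s hs0).2.2.2.2.2.1 (hQ1z s (le_trans hτmem.1 hs.1.le)), ha0]
        exact min_eq_left (le_of_lt hμ1)
      have := (hc s hs0).2.2.2.2.2.2.1.1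
      rw [hs1z]; linarith
    have hI := integral_le_const hτmem.2 (hIg' τ t) hb
    have hQd := hQ2d τ t hτ0 (le_trans hτ0 hτmem.2)
    have hτC' : Q2 τ ≤ h := hτC
    have hzer : (0:ℝ) * (t - τ) = 0 := by ring
    linarith
  -- master absorption lemma
  have habs : ∀ w : ℝ, 0 ≤ w → Q1 w = 0 → Q2 w = h →
      ∀ t : ℝ, w ≤ t → Q1 t = 0 ∧ Q2 t = h := by
    intro w hw hQ1w hQ2w t hwt
    have hup : ∀ t : ℝ, w ≤ t → h ≤ Q2 t := fun t ht => hL2 w t hw ht (le_of_eq hQ2w.symm)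
    have hz : ∀ t : ℝ, w ≤ t → Q1 t = 0 := hQ1abs w hw hQ1w hup
    have hdn : ∀ t : ℝ, w ≤ t → Q2 t ≤ h := hQ2abs w hw hz (le_of_eq hQ2w)
    exact ⟨hz t hwt, le_antisymm (hdn t hwt) (hup t hwt)⟩
  constructor
  · -- reachability
    -- Phase A: ∃ u with Q2 u ≥ h
    have hA : ∃ u : ℝ, 0 ≤ u ∧ h ≤ Q2 u := by
      by_contra hA
      push_neg at hA
      set t1 : ℝ := h / (μ1 - μ2) with ht1def
      have ht1pos : 0 < t1 := div_pos hh (by linarith)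
      have hs1 : ∀ s ∈ Set.Ioc (0:ℝ) t1, s1 s = μ1 := by
        intro s hs
        exact hs1μ1 s hs.1.le (hA s hs.1.le)
      have := hgrow 0 t1 le_rfl ht1pos.le hs1
      have h20 : 0 ≤ Q2 0 := (hpos 0 le_rfl).2
      have hmul : (μ1 - μ2) * t1 = h := by
        rw [ht1def]
        exact mul_div_cancel₀ h (by linarith)
      have : h ≤ Q2 t1 := by
        rw [sub_zero] at this
        linarith
      exact absurd this (not_le.mpr (hA t1 ht1pos.le))
    obtain ⟨u, hu0, hQ2u⟩ := hA
    have hQ2ge : ∀ t : ℝ, u ≤ t → h ≤ Q2 t := fun t ht => hL2 u t hu0 ht hQ2u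
    -- Phase B: ∃ v ≥ u with Q1 v = 0
    have hB : ∃ v : ℝ, u ≤ v ∧ Q1 v = 0 := by
      by_contra hB
      push_neg at hB
      set t1 : ℝ := u + Q1 u / μ1 + 1 with ht1def
      have hQ1u : 0 ≤ Q1 u := (hpos u hu0).1
      have hdiv : 0 ≤ Q1 u / μ1 := div_nonneg hQ1u hμ1.le
      have hut : u ≤ t1 := by rw [ht1def]; linarith
      have hp : ∀ s ∈ Set.Ioc u t1, 0 < Q1 s := by
        intro s hs
        exact lt_of_le_of_ne (hpos s (le_trans hu0 hs.1.le)).1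
          (Ne.symm (hB s hs.1.le))
      have hd := hdrain u t1 hu0 hut hQ2u hp
      have hmul : μ1 * (t1 - u) = Q1 u + μ1 := by
        have : t1 - u = Q1 u / μ1 + 1 := by rw [ht1def]; ring
        rw [this]
        field_simp
      have ht10 : 0 ≤ t1 := le_trans hu0 hut
      have := (hpos t1 ht10).1
      linarith
    obtain ⟨v, huv, hQ1v⟩ := hB
    have hv0 : 0 ≤ v := le_trans hu0 huv
    have hQ2gev : ∀ t : ℝ, v ≤ t → h ≤ Q2 t := fun t ht => hQ2ge t (le_trans huv ht)
    have hQ1z : ∀ t : ℝ, v ≤ t → Q1 t = 0 := hQ1abs v hv0 hQ1v hQ2gev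
    -- Phase C: ∃ w ≥ v with Q2 w = h
    have hC : ∃ w : ℝ, v ≤ w ∧ Q2 w = h := by
      by_contra hC
      push_neg at hC
      have hQ2gt : ∀ t : ℝ, v ≤ t → h < Q2 t :=
        fun t ht => lt_of_le_of_ne (hQ2gev t ht) (Ne.symm (hC t ht))
      set t1 : ℝ := v + Q2 v / μ2 with ht1def
      have hQ2v0 : 0 ≤ Q2 v := (hpos v hv0).2
      have hdiv : 0 ≤ Q2 v / μ2 := div_nonneg hQ2v0 hμ2.le
      have hvt : v ≤ t1 := by rw [ht1def]; linarith
      have hb : ∀ s ∈ Set.Ioc v t1, s1 s - s2 s ≤ -μ2 := by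
        intro s hs
        have hs0 : (0:ℝ) ≤ s := le_trans hv0 hs.1.le
        have hgt : h < Q2 s := hQ2gt s hs.1.le
        have ha0 : a s = 0 := (hc s hs0).2.2.1 (Or.inr hgt)
        have hs1z : s1 s = 0 := by
          rw [(hc s hs0).2.2.2.2.2.1 (hQ1z s hs.1.le), ha0]
          exact min_eq_left (le_of_lt hμ1)
        have hs2 : s2 s = μ2 := (hc s hs0).2.2.2.2.2.2.2.1 (lt_trans hh hgt)
        rw [hs1z, hs2]; linarith
      have hI := integral_le_const hvt (hIg' v t1) hb
      have hmul : μ2 * (t1 - v) = Q2 v := by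
        have : t1 - v = Q2 v / μ2 := by rw [ht1def]; ring
        rw [this]
        field_simp
      have hQd := hQ2d v t1 hv0 (le_trans hv0 hvt)
      have hlast := hQ2gt t1 hvt
      linarith
    obtain ⟨w, hvw, hQ2w⟩ := hC
    have hw0 : 0 ≤ w := le_trans hv0 hvw
    exact ⟨w, hw0, fun t ht => habs w hw0 (hQ1z w hvw) hQ2w t ht⟩
  · -- absorption from initial point
    intro ⟨h10, h20⟩ t ht
    exact habs 0 le_rfl h10 h20 t ht
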